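/- Let G be a finite group. The set of process-matrix correlations achievable with finite-dimensional systems in the G-twirled quantum theory equals the set achievable in finite-dimensional ordinary quantum theory: C_{Tw_G}^{proc,fin} = C_QT^{proc,fin}. That is, a family of probabilities p(a_1,…,a_n|x_1,…,x_n) arises from some finite-dimensional globally invariant twirled process matrix together with local (G,U)-covariant instruments (for some finite-dimensional unitary representations of G on the local systems) if and only if it arises from some finite-dimensional ordinary quantum process matrix together with arbitrary local quantum instruments. -/

import Mathlib

open Matrix BigOperators
open scoped Kronecker ComplexOrder

noncomputable section

/-- Entrywise complex conjugation of a matrix (in the fixed basis). -/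
def conjM {m n : Type*} (M : Matrix m n ℂ) : Matrix m n ℂ := M.map (starRingEnd ℂ)

/-- `n`-fold tensor (Kronecker) product of square complex matrices. -/
def tensorN {n : ℕ} {ι : Fin n → Type} (M : ∀ k, Matrix (ι k) (ι k) ℂ) :
    Matrix ((k : Fin n) → ι k) ((k : Fin n) → ι k) ℂ :=
  fun i j => ∏ k, M k (i k) (j k)

/-- Partial trace over the second tensor factor. -/
def ptr2 {a b : Type*} [Fintype b] (M : Matrix (a × b) (a × b) ℂ) : Matrix a a ℂ :=
  fun i j => ∑ z, M (i, z) (j, z)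

/-- Partial trace over the last factor of a triple tensor product. -/
def ptr3 {a b c : Type*} [Fintype c] (M : Matrix (a × b × c) (a × b × c) ℂ) :
    Matrix (a × b) (a × b) ℂ :=
  fun i j => ∑ z, M (i.1, i.2, z) (j.1, j.2, z)

/-- CPTP Choi matrix: positive semidefinite with partial trace over the output equal
to the identity on the input. -/
def IsCPTPChoi {a b : Type} [Fintype a] [Fintype b] [DecidableEq a]
    (M : Matrix (a × b) (a × b) ℂ) : Prop :=
  M.PosSemidef ∧ ptr2 M = 1

/-- `p ∈ C_QT^{proc,fin}`: the correlation `p` arises from a finite-dimensional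
ordinary quantum process matrix together with arbitrary local quantum
instruments. -/
def QTRealizes {n : ℕ} {St Out : Fin n → Type} [∀ k, Fintype (Out k)]
    (p : ((k : Fin n) → Out k) → ((k : Fin n) → St k) → ℂ) : Prop :=
  ∃ (d1 d2 : Fin n → ℕ)
    (W : Matrix ((k : Fin n) → Fin (d1 k) × Fin (d2 k))
      ((k : Fin n) → Fin (d1 k) × Fin (d2 k)) ℂ)
    (M : ∀ k, St k → Out k →
      Matrix (Fin (d1 k) × Fin (d2 k)) (Fin (d1 k) × Fin (d2 k)) ℂ),
    W.PosSemidef ∧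
    (∀ T : ∀ k, Matrix (Fin (d1 k) × Fin (d2 k)) (Fin (d1 k) × Fin (d2 k)) ℂ,
      (∀ k, IsCPTPChoi (T k)) → (W * tensorN T).trace = 1) ∧
    (∀ k x a, (M k x a).PosSemidef) ∧
    (∀ k x, IsCPTPChoi (∑ a, M k x a)) ∧
    (∀ (a : ∀ k, Out k) (x : ∀ k, St k),
      p a x = (W * tensorN (fun k => M k (x k) (a k))).trace)

/-- `p ∈ C_{Tw_G}^{proc,fin}`: the correlation `p` arises from a finite-dimensional
globally invariant twirled process matrix together with local `(G,U)`-covariant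
instruments, for some finite-dimensional unitary representations of `G` on the
local systems. -/
def TwRealizes (G : Type) [Group G] [Fintype G]
    {n : ℕ} {St Out : Fin n → Type} [∀ k, Fintype (Out k)]
    (p : ((k : Fin n) → Out k) → ((k : Fin n) → St k) → ℂ) : Prop :=
  ∃ (d1 d2 : Fin n → ℕ)
    (U1 : ∀ k, G → Matrix (Fin (d1 k)) (Fin (d1 k)) ℂ)
    (U2 : ∀ k, G → Matrix (Fin (d2 k)) (Fin (d2 k)) ℂ),
    (∀ k g, U1 k g ∈ Matrix.unitaryGroup (Fin (d1 k)) ℂ) ∧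
    (∀ k g, U2 k g ∈ Matrix.unitaryGroup (Fin (d2 k)) ℂ) ∧
    (∀ k g h, U1 k (g * h) = U1 k g * U1 k h) ∧
    (∀ k g h, U2 k (g * h) = U2 k g * U2 k h) ∧
    ∃ (W : Matrix ((k : Fin n) → Fin (d1 k) × Fin (d2 k))
        ((k : Fin n) → Fin (d1 k) × Fin (d2 k)) ℂ)
      (M : ∀ k, St k → Out k →
        Matrix (Fin (d1 k) × Fin (d2 k)) (Fin (d1 k) × Fin (d2 k)) ℂ),
      (∀ g : G,
        tensorN (fun k => U1 k g ⊗ₖ conjM (U2 k g)) * W *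
          (tensorN (fun k => U1 k g ⊗ₖ conjM (U2 k g)))ᴴ = W) ∧
      W.PosSemidef ∧
      (∀ N : ∀ k, Matrix (Fin (d1 k) × Fin (d2 k)) (Fin (d1 k) × Fin (d2 k)) ℂ,
        (∀ k, IsCPTPChoi (N k)) →
        (∀ k g, (U1 k g ⊗ₖ conjM (U2 k g)) * N k *
          (U1 k g ⊗ₖ conjM (U2 k g))ᴴ = N k) →
        (W * tensorN N).trace = 1) ∧
      (∀ k x a, (M k x a).PosSemidef) ∧
      (∀ k x a g, (U1 k g ⊗ₖ conjM (U2 k g)) * M k x a *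
        (U1 k g ⊗ₖ conjM (U2 k g))ᴴ = M k x a) ∧
      (∀ k x, IsCPTPChoi (∑ a, M k x a)) ∧
      (∀ (a : ∀ k, Out k) (x : ∀ k, St k),
        p a x = (W * tensorN (fun k => M k (x k) (a k))).trace)

section helpers
variable {n : ℕ} {ι : Fin n → Type} [∀ k, Fintype (ι k)]

lemma tensorN_mul (A B : ∀ k, Matrix (ι k) (ι k) ℂ) :
    tensorN A * tensorN B = tensorN fun k => A k * B k := by
  ext i j
  show _ = ∏ k, ∑ x, A k (i k) x * B k x (j k)
  rw [Fintype.prod_sum fun k x => A k (i k) x * B k x (j k)]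
  simp only [tensorN, Matrix.mul_apply]
  exact Finset.sum_congr rfl fun f _ => (Finset.prod_mul_distrib).symm

lemma tensorN_conjTranspose (A : ∀ k, Matrix (ι k) (ι k) ℂ) :
    (tensorN A)ᴴ = tensorN fun k => (A k)ᴴ := by
  ext i j
  simp [tensorN, conjTranspose_apply, map_prod]

lemma tensorN_one [∀ k, DecidableEq (ι k)] :
    tensorN (fun k => (1 : Matrix (ι k) (ι k) ℂ)) = 1 := by
  ext i j
  by_cases h : i = j
  · subst h; simp [tensorN, Matrix.one_apply]
  · obtain ⟨k, hk⟩ : ∃ k, i k ≠ j k := by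
      by_contra hc; push_neg at hc; exact h (funext hc)
    rw [show (1 : Matrix ((k : Fin n) → ι k) _ ℂ) i j = 0 from Matrix.one_apply_ne h]
    exact Finset.prod_eq_zero (Finset.mem_univ k) (Matrix.one_apply_ne hk)

lemma tensorN_smul_sum {G : Type*} [Fintype G] (c : ℂ) (F : ∀ k, G → Matrix (ι k) (ι k) ℂ) :
    tensorN (fun k => c • ∑ h, F k h) =
      c ^ n • ∑ g : Fin n → G, tensorN (fun k => F k (g k)) := by
  ext i j
  simp only [tensorN, Matrix.smul_apply, Matrix.sum_apply, smul_eq_mul]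
  rw [Finset.prod_mul_distrib, Finset.prod_const, Finset.card_univ, Fintype.card_fin,
    Fintype.prod_sum fun k x => F k x (i k) (j k)]

lemma conjM_mul {a b c : Type*} [Fintype b] (A : Matrix a b ℂ) (B : Matrix b c ℂ) :
    conjM (A * B) = conjM A * conjM B := by
  ext i j; simp [conjM, Matrix.mul_apply, Matrix.map_apply]

lemma conjM_one {a : Type*} [DecidableEq a] : conjM (1 : Matrix a a ℂ) = 1 := by
  ext i j; simp [conjM, Matrix.one_apply, Matrix.map_apply, apply_ite]

lemma conjM_conjTranspose {a b : Type*} (A : Matrix a b ℂ) :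
    (conjM A)ᴴ = conjM Aᴴ := by
  ext i j; simp [conjM, conjTranspose_apply, Matrix.map_apply]

lemma kronecker_conjTranspose {a b c d : Type*} (A : Matrix a b ℂ) (B : Matrix c d ℂ) :
    (A ⊗ₖ B)ᴴ = Aᴴ ⊗ₖ Bᴴ := by
  ext i j; simp [conjTranspose_apply, kroneckerMap_apply]

lemma ptr2_smul {a b : Type*} [Fintype b] (c : ℂ) (M : Matrix (a × b) (a × b) ℂ) :
    ptr2 (c • M) = c • ptr2 M := by
  ext i j; simp [ptr2, Finset.mul_sum]

lemma ptr2_sum {a b : Type*} [Fintype b] {G : Type*} [Fintype G]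
    (F : G → Matrix (a × b) (a × b) ℂ) :
    ptr2 (∑ g, F g) = ∑ g, ptr2 (F g) := by
  ext i j
  simp only [ptr2, Matrix.sum_apply]
  exact Finset.sum_comm

lemma posSemidef_smul' {m : Type*} [Fintype m] {M : Matrix m m ℂ} (hM : M.PosSemidef)
    {c : ℂ} (hc : 0 ≤ c) : (c • M).PosSemidef := by
  constructor
  · have him : star c = c := by
      rw [Complex.star_def, Complex.conj_eq_iff_im]
      exact (Complex.nonneg_iff.mp hc).2.symm
    rw [Matrix.IsHermitian, conjTranspose_smul, him, hM.1]
  · intro x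
    exact (hM.smul hc).2 x

lemma posSemidef_sum {m : Type*} [Fintype m] {G : Type*} [Fintype G]
    {F : G → Matrix m m ℂ} (hF : ∀ g, (F g).PosSemidef) :
    (∑ g, F g).PosSemidef := by
  classical
  refine Finset.sum_induction F _ (fun a b ha hb => ha.add hb) Matrix.PosSemidef.zero
    (fun g _ => hF g)

end helpers

lemma ptr2_conj {a b : Type*} [Fintype a] [Fintype b] [DecidableEq b]
    (A : Matrix a a ℂ) (B : Matrix b b ℂ) (hB : Bᴴ * B = 1)
    (X : Matrix (a × b) (a × b) ℂ) :
    ptr2 ((A ⊗ₖ conjM B) * X * (A ⊗ₖ conjM B)ᴴ) = A * ptr2 X * Aᴴ := by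
  ext i j
  simp only [ptr2, Matrix.mul_apply, conjTranspose_apply, kroneckerMap_apply, conjM,
    Matrix.map_apply, Fintype.sum_prod_type, Finset.sum_mul, Finset.mul_sum, star_mul',
    Complex.star_def, Complex.conj_conj]
  have hB' : ∀ p q : b, (∑ z, (starRingEnd ℂ) (B z p) * B z q) = if p = q then 1 else 0 := by
    intro p q
    have := congrFun (congrFun hB p) q
    simpa [Matrix.mul_apply, conjTranspose_apply, Matrix.one_apply] using this
  trans ∑ x1 : a, ∑ x2 : b, ∑ x3 : a, ∑ x4 : b,
      (A i x3 * (starRingEnd ℂ) (A j x1) * X (x3, x4) (x1, x2)) *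
        ∑ x : b, (starRingEnd ℂ) (B x x4) * B x x2
  · rw [Finset.sum_comm]
    refine Finset.sum_congr rfl fun x1 _ => ?_
    rw [Finset.sum_comm]
    refine Finset.sum_congr rfl fun x2 _ => ?_
    rw [Finset.sum_comm]
    refine Finset.sum_congr rfl fun x3 _ => ?_
    rw [Finset.sum_comm]
    refine Finset.sum_congr rfl fun x4 _ => ?_
    rw [Finset.mul_sum]
    exact Finset.sum_congr rfl fun x _ => by ring
  · simp only [hB', mul_ite, mul_one, mul_zero, Finset.sum_ite_eq', Finset.mem_univ, if_true,
      Finset.sum_ite_eq, Finset.sum_ite_irrel, Finset.sum_const_zero]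
    rw [Finset.sum_comm]
    rw [Finset.sum_comm]
    refine Finset.sum_congr rfl fun x _ => ?_
    rw [Finset.sum_comm]
    exact Finset.sum_congr rfl fun x1 _ => Finset.sum_congr rfl fun y _ => by ring


/-- finite-dimensional operational equivalence.  For every
finite group `G`, the finite-dimensional process-matrix correlations of the
`G`-twirled theory coincide with those of ordinary quantum theory:
`C_{Tw_G}^{proc,fin} = C_QT^{proc,fin}`. -/
theorem twirled_correlations_eq_qt
    (G : Type) [Group G] [Fintype G]
    {n : ℕ} {St Out : Fin n → Type} [∀ k, Fintype (Out k)] :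
    {p : ((k : Fin n) → Out k) → ((k : Fin n) → St k) → ℂ | TwRealizes G p} =
    {p : ((k : Fin n) → Out k) → ((k : Fin n) → St k) → ℂ | QTRealizes p} := by
  ext p
  simp only [Set.mem_setOf_eq]
  constructor
  · -- Tw ⊆ QT
    rintro ⟨d1, d2, U1, U2, hU1, hU2, hm1, hm2, W, M, hInv, hW, hNorm, hMps, hMcov, hMcptp, hp⟩
    classical
    set c : ℂ := ((Fintype.card G : ℂ))⁻¹ with hc_def
    have hcard : (Fintype.card G : ℂ) ≠ 0 := Nat.cast_ne_zero.mpr Fintype.card_ne_zero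
    have hc0 : 0 ≤ c := by
      rw [hc_def, ← Complex.ofReal_natCast, ← Complex.ofReal_inv]
      exact Complex.zero_le_real.mpr (by positivity)
    have hU1' : ∀ k g, U1 k g * (U1 k g)ᴴ = 1 := fun k g => by
      have := Matrix.mem_unitaryGroup_iff.mp (hU1 k g)
      rwa [Matrix.star_eq_conjTranspose] at this
    have hU2' : ∀ k g, (U2 k g)ᴴ * U2 k g = 1 := fun k g => by
      have := Matrix.mem_unitaryGroup_iff'.mp (hU2 k g)
      rwa [Matrix.star_eq_conjTranspose] at this
    have hVmul : ∀ k (g h : G),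
        U1 k (g * h) ⊗ₖ conjM (U2 k (g * h)) =
          (U1 k g ⊗ₖ conjM (U2 k g)) * (U1 k h ⊗ₖ conjM (U2 k h)) := by
      intro k g h
      rw [hm1, hm2, conjM_mul, Matrix.mul_kronecker_mul]
    -- the key trace identity
    have hTW : ∀ (T : ∀ k, Matrix (Fin (d1 k) × Fin (d2 k)) (Fin (d1 k) × Fin (d2 k)) ℂ),
        ((c ^ n • ∑ g : Fin n → G,
            (tensorN fun k => U1 k (g k) ⊗ₖ conjM (U2 k (g k)))ᴴ * W *
              (tensorN fun k => U1 k (g k) ⊗ₖ conjM (U2 k (g k)))) * tensorN T).trace =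
          (W * tensorN fun k =>
            c • ∑ g : G, (U1 k g ⊗ₖ conjM (U2 k g)) * T k *
              (U1 k g ⊗ₖ conjM (U2 k g))ᴴ).trace := by
      intro T
      rw [tensorN_smul_sum c
        (fun k g => (U1 k g ⊗ₖ conjM (U2 k g)) * T k * (U1 k g ⊗ₖ conjM (U2 k g))ᴴ)]
      rw [Matrix.mul_smul, Matrix.smul_mul, trace_smul, trace_smul]
      congr 1
      rw [Finset.sum_mul, Matrix.mul_sum, trace_sum, trace_sum]
      refine Finset.sum_congr rfl fun g _ => ?_
      have hfac : tensorN (fun k => (U1 k (g k) ⊗ₖ conjM (U2 k (g k))) * T k *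
            (U1 k (g k) ⊗ₖ conjM (U2 k (g k)))ᴴ) =
          (tensorN fun k => U1 k (g k) ⊗ₖ conjM (U2 k (g k))) * tensorN T *
            (tensorN fun k => U1 k (g k) ⊗ₖ conjM (U2 k (g k)))ᴴ := by
        rw [tensorN_conjTranspose, tensorN_mul, tensorN_mul]
      rw [hfac]
      rw [Matrix.mul_assoc ((tensorN fun k => U1 k (g k) ⊗ₖ conjM (U2 k (g k)))ᴴ * W)
        (tensorN fun k => U1 k (g k) ⊗ₖ conjM (U2 k (g k))) (tensorN T),
        Matrix.mul_assoc ((tensorN fun k => U1 k (g k) ⊗ₖ conjM (U2 k (g k)))ᴴ) W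
        ((tensorN fun k => U1 k (g k) ⊗ₖ conjM (U2 k (g k))) * tensorN T),
        trace_mul_comm]
      simp only [Matrix.mul_assoc]
    -- the twirled channel is a covariant CPTP map
    have hTWcptp : ∀ (T : ∀ k, Matrix (Fin (d1 k) × Fin (d2 k)) (Fin (d1 k) × Fin (d2 k)) ℂ),
        (∀ k, IsCPTPChoi (T k)) → ∀ k, IsCPTPChoi
          (c • ∑ g : G, (U1 k g ⊗ₖ conjM (U2 k g)) * T k * (U1 k g ⊗ₖ conjM (U2 k g))ᴴ) := by
      intro T hT k
      constructor
      · exact posSemidef_smul'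
          (posSemidef_sum fun g => (hT k).1.mul_mul_conjTranspose_same _) hc0
      · have h1 : ∀ g : G, ptr2 ((U1 k g ⊗ₖ conjM (U2 k g)) * T k *
            (U1 k g ⊗ₖ conjM (U2 k g))ᴴ) = 1 := by
          intro g
          rw [ptr2_conj (U1 k g) (U2 k g) (hU2' k g) (T k), (hT k).2, Matrix.mul_one, hU1']
        rw [ptr2_smul, ptr2_sum]
        simp only [h1]
        rw [Finset.sum_const, Finset.card_univ, ← Nat.cast_smul_eq_nsmul ℂ, smul_smul,
          hc_def, inv_mul_cancel₀ hcard, one_smul]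
    have hTWcov : ∀ (T : ∀ k, Matrix (Fin (d1 k) × Fin (d2 k)) (Fin (d1 k) × Fin (d2 k)) ℂ)
        (k : Fin n) (h : G),
        (U1 k h ⊗ₖ conjM (U2 k h)) *
          (c • ∑ g : G, (U1 k g ⊗ₖ conjM (U2 k g)) * T k * (U1 k g ⊗ₖ conjM (U2 k g))ᴴ) *
          (U1 k h ⊗ₖ conjM (U2 k h))ᴴ =
        c • ∑ g : G, (U1 k g ⊗ₖ conjM (U2 k g)) * T k * (U1 k g ⊗ₖ conjM (U2 k g))ᴴ := by
      intro T k h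
      rw [Matrix.mul_smul, Matrix.smul_mul]
      congr 1
      rw [Matrix.mul_sum, Matrix.sum_mul]
      rw [← Equiv.sum_comp (Equiv.mulLeft h)
        (fun g => (U1 k g ⊗ₖ conjM (U2 k g)) * T k * (U1 k g ⊗ₖ conjM (U2 k g))ᴴ)]
      refine Finset.sum_congr rfl fun g _ => ?_
      simp only [Equiv.coe_mulLeft, hVmul, Matrix.conjTranspose_mul, Matrix.mul_assoc]
    -- covariant instruments are fixed by twirling
    have hfix : ∀ k x a',
        c • ∑ g : G, (U1 k g ⊗ₖ conjM (U2 k g)) * M k x a' * (U1 k g ⊗ₖ conjM (U2 k g))ᴴ =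
          M k x a' := by
      intro k x a'
      rw [show (∑ g : G, (U1 k g ⊗ₖ conjM (U2 k g)) * M k x a' *
          (U1 k g ⊗ₖ conjM (U2 k g))ᴴ) = ∑ _g : G, M k x a' from
        Finset.sum_congr rfl fun g _ => hMcov k x a' g]
      rw [Finset.sum_const, Finset.card_univ, ← Nat.cast_smul_eq_nsmul ℂ, smul_smul,
        hc_def, inv_mul_cancel₀ hcard, one_smul]
    refine ⟨d1, d2, c ^ n • ∑ g : Fin n → G,
      (tensorN fun k => U1 k (g k) ⊗ₖ conjM (U2 k (g k)))ᴴ * W *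
        (tensorN fun k => U1 k (g k) ⊗ₖ conjM (U2 k (g k))), M, ?_, ?_, hMps, hMcptp, ?_⟩
    · exact posSemidef_smul'
        (posSemidef_sum fun g => hW.conjTranspose_mul_mul_same _) (pow_nonneg hc0 n)
    · intro T hT
      rw [hTW T]
      exact hNorm _ (hTWcptp T hT) (fun k g => hTWcov T k g)
    · intro a x
      rw [hp a x, hTW (fun k => M k (x k) (a k))]
      rw [show (fun k => c • ∑ g : G, (U1 k g ⊗ₖ conjM (U2 k g)) * M k (x k) (a k) *
          (U1 k g ⊗ₖ conjM (U2 k g))ᴴ) = fun k => M k (x k) (a k) from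
        funext fun k => hfix k (x k) (a k)]
  · -- QT ⊆ Tw : use the trivial representation
    rintro ⟨d1, d2, W, M, hW, hNorm, hMps, hMcptp, hp⟩
    classical
    refine ⟨d1, d2, fun _ _ => 1, fun _ _ => 1,
      fun k g => Submonoid.one_mem _, fun k g => Submonoid.one_mem _,
      fun k g h => (one_mul 1).symm, fun k g h => (one_mul 1).symm,
      W, M, ?_, hW, ?_, hMps, ?_, hMcptp, hp⟩
    · intro g
      have h2 : (tensorN fun k => (1 : Matrix (Fin (d1 k)) (Fin (d1 k)) ℂ) ⊗ₖ
          conjM (1 : Matrix (Fin (d2 k)) (Fin (d2 k)) ℂ)) = 1 := by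
        rw [show (fun k => (1 : Matrix (Fin (d1 k)) (Fin (d1 k)) ℂ) ⊗ₖ
            conjM (1 : Matrix (Fin (d2 k)) (Fin (d2 k)) ℂ)) =
          fun k => (1 : Matrix (Fin (d1 k) × Fin (d2 k)) (Fin (d1 k) × Fin (d2 k)) ℂ) from
          funext fun k => by rw [conjM_one, Matrix.one_kronecker_one]]
        exact tensorN_one
      rw [h2, Matrix.conjTranspose_one, one_mul, mul_one]
    · intro N hN _
      exact hNorm N hN
    · intro k x a g
      rw [conjM_one, Matrix.one_kronecker_one, Matrix.conjTranspose_one, one_mul, mul_one]
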